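/- In X_g^d (which satisfies TSSM with gap g), for any finite W and any two globally admissible boundary configurations δ_1, δ_2 on ∂W, the maximal configurations θ_{δ_1}, θ_{δ_2} on W satisfy: the set of sites where θ_{δ_1} and θ_{δ_2} differ is contained in N_g(Σ_{∂W}(δ_1,δ_2)) ∩ W. -/

import Mathlib

open Classical

abbrev Site (d : ℕ) := Fin d → ℤ

def dist1 {d : ℕ} (p q : Site d) : ℕ := ∑ i, (p i - q i).natAbs

def unitVec {d : ℕ} (i : Fin d) : Site d := fun j => if j = i then 1 else 0

def bd {d : ℕ} (S : Set (Site d)) : Set (Site d) :=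
  {p | p ∉ S ∧ ∃ q ∈ S, dist1 p q = 1}

def globallyAdm {d : ℕ} {A : Type*} (X : Set (Site d → A)) (S : Set (Site d))
    (u : Site d → A) : Prop := ∃ x ∈ X, ∀ p ∈ S, x p = u p

/-- The nearest-neighbour SFT `X_g^d` over alphabet `{0, 1, …, g}` where adjacent sites
differ by at most `1`. -/
def Xgd (g d : ℕ) : Set (Site d → ℤ) :=
  {x | (∀ p : Site d, 0 ≤ x p ∧ x p ≤ g) ∧
       ∀ (p : Site d) (i : Fin d), |x p - x (p + unitVec i)| ≤ 1}

/-- `w δ` is locally admissible for `X_g^d`: `w` (on `W`) takes values in `{0,…,g}` and no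
edge inside `W ∪ ∂W` of the combined configuration (`w` on `W`, `δ` on `∂W`) has a
difference larger than `1`. -/
def locAdmWith (g : ℕ) {d : ℕ} (W : Set (Site d)) (w δ : Site d → ℤ) : Prop :=
  (∀ p ∈ W, 0 ≤ w p ∧ w p ≤ g) ∧
  ∀ p ∈ W ∪ bd W, ∀ i : Fin d, p + unitVec i ∈ W ∪ bd W →
    |(if p ∈ W then w p else δ p) -
      (if p + unitVec i ∈ W then w (p + unitVec i) else δ (p + unitVec i))| ≤ 1

/-!
The maximal configuration is the envelope `θ_δ(p) = min (g, min_{b ∈ ∂W} δ(b) + |p - b|₁)`.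
It is at most this envelope because any point of `X_g^d` is 1-Lipschitz for `|·|₁` and
bounded by `g`; conversely the envelope agrees with `δ` on `∂W` and is itself locally
admissible, so maximality bounds it by `θ_δ`.

If `θ_{δ₁}(p) < θ_{δ₂}(p) ≤ g`, the minimum defining `θ_{δ₁}(p)` is attained at some `b ∈ ∂W`,
whence `δ₁(b) + |p - b|₁ = θ_{δ₁}(p) < θ_{δ₂}(p) ≤ δ₂(b) + |p - b|₁`. So `δ₁(b) ≠ δ₂(b)`, and
`|p - b|₁ ≤ θ_{δ₁}(p) - δ₁(b) < g` because `δ₁ ≥ 0`.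
-/

section Lattice

variable {d : ℕ}

lemma dist1_self (p : Site d) : dist1 p p = 0 := by
  simp [dist1]

lemma dist1_comm (p q : Site d) : dist1 p q = dist1 q p :=
  Finset.sum_congr rfl fun i _ => by omega

lemma dist1_triangle (p q r : Site d) : dist1 p r ≤ dist1 p q + dist1 q r := by
  unfold dist1
  rw [← Finset.sum_add_distrib]
  exact Finset.sum_le_sum fun i _ => by omega

lemma natAbs_sub_add_unitVec (p q : Site d) (i j : Fin d) :
    ((p + unitVec i) j - q j).natAbs = (p j - q j + if j = i then 1 else 0).natAbs := by
  simp only [Pi.add_apply, unitVec]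
  ring_nf

lemma dist1_add_unitVec (p : Site d) (i : Fin d) : dist1 p (p + unitVec i) = 1 := by
  rw [dist1_comm]
  unfold dist1
  simp_rw [natAbs_sub_add_unitVec, sub_self, zero_add]
  simp [apply_ite Int.natAbs]

lemma dist1_add_unitVec_add_one {p q : Site d} {i : Fin d} (hi : p i < q i) :
    dist1 (p + unitVec i) q + 1 = dist1 p q := by
  unfold dist1
  have hterm : ∀ j, (p j - q j).natAbs
      = ((p + unitVec i) j - q j).natAbs + if j = i then 1 else 0 := by
    intro j
    rw [natAbs_sub_add_unitVec]
    split_ifs with h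
    · subst h; omega
    · simp
  rw [Finset.sum_congr rfl fun j _ => hterm j, Finset.sum_add_distrib]
  simp

lemma abs_sub_le_dist1 {f : Site d → ℤ} (hf : ∀ p i, |f p - f (p + unitVec i)| ≤ 1)
    (p q : Site d) : |f p - f q| ≤ dist1 p q := by
  induction hn : dist1 p q using Nat.strong_induction_on generalizing p q with
  | _ n ih =>
  by_cases hpq : p = q
  · simp [hpq]
  obtain ⟨i, hi⟩ : ∃ i, p i ≠ q i := Function.ne_iff.mp hpq
  wlog hlt : p i < q i generalizing p q
  · rw [abs_sub_comm]
    exact this q p (by rw [dist1_comm, hn]) (Ne.symm hpq) hi.symm (by omega)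
  have hstep := dist1_add_unitVec_add_one hlt
  have := ih _ (by omega) (p + unitVec i) q rfl
  calc |f p - f q| ≤ |f p - f (p + unitVec i)| + |f (p + unitVec i) - f q| := abs_sub_le _ _ _
    _ ≤ 1 + dist1 (p + unitVec i) q := add_le_add (hf p i) this
    _ = n := by rw [← hn, ← hstep]; push_cast; ring

lemma abs_sub_le_dist1_of_mem_Xgd {g : ℕ} {x : Site d → ℤ} (hx : x ∈ Xgd g d) (p q : Site d) :
    |x p - x q| ≤ dist1 p q :=
  abs_sub_le_dist1 hx.2 p q

lemma bd_finite {W : Set (Site d)} (hW : W.Finite) : (bd W).Finite := by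
  refine (hW.biUnion fun q _ => Set.Finite.pi fun i => Set.finite_Icc (q i - 1) (q i + 1)).subset ?_
  rintro p ⟨-, q, hq, hd⟩
  refine Set.mem_biUnion hq fun i _ => ?_
  have : (p i - q i).natAbs ≤ dist1 p q :=
    Finset.single_le_sum (f := fun j => (p j - q j).natAbs) (fun _ _ => Nat.zero_le _)
      (Finset.mem_univ i)
  simp only [Set.mem_Icc]
  omega

end Lattice

section MaximalConfiguration

variable {d : ℕ}

def IsMaximalConfig (g : ℕ) (W : Set (Site d)) (δ θ : Site d → ℤ) : Prop :=
  (∃ x ∈ Xgd g d, (∀ p ∈ W, x p = θ p) ∧ ∀ p ∈ bd W, x p = δ p) ∧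
    ∀ w : Site d → ℤ, locAdmWith g W w δ → ∀ p ∈ W, w p ≤ θ p

/-- The largest 1-Lipschitz function that is at most `g` everywhere and at most `δ` on `B`. -/
def boundaryEnvelope (g : ℕ) (B : Finset (Site d)) (δ : Site d → ℤ) (p : Site d) : ℤ :=
  B.fold min (g : ℤ) fun b => δ b + dist1 p b

variable {g : ℕ} {B : Finset (Site d)} {δ : Site d → ℤ}

lemma boundaryEnvelope_le (p : Site d) : boundaryEnvelope g B δ p ≤ g :=
  (Finset.fold_min_le _).mpr (Or.inl le_rfl)

lemma boundaryEnvelope_le_add_dist1 {b : Site d} (hb : b ∈ B) (p : Site d) :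
    boundaryEnvelope g B δ p ≤ δ b + dist1 p b :=
  (Finset.fold_min_le _).mpr (Or.inr ⟨b, hb, le_rfl⟩)

lemma boundaryEnvelope_le_boundaryEnvelope_add_dist1 (p q : Site d) :
    boundaryEnvelope g B δ p ≤ boundaryEnvelope g B δ q + dist1 p q := by
  have hpq : (0 : ℤ) ≤ dist1 p q := Int.natCast_nonneg _
  rcases (Finset.fold_min_le _).mp (le_refl (boundaryEnvelope g B δ q)) with hg | ⟨b, hb, hbq⟩
  · linarith [boundaryEnvelope_le (g := g) (B := B) (δ := δ) p]
  · have htri : (dist1 p b : ℤ) ≤ dist1 p q + dist1 q b := by exact_mod_cast dist1_triangle p q b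
    linarith [boundaryEnvelope_le_add_dist1 (g := g) (δ := δ) hb p]

lemma abs_boundaryEnvelope_sub_add_unitVec (p : Site d) (i : Fin d) :
    |boundaryEnvelope g B δ p - boundaryEnvelope g B δ (p + unitVec i)| ≤ 1 := by
  have h₁ := boundaryEnvelope_le_boundaryEnvelope_add_dist1 (g := g) (B := B) (δ := δ)
    p (p + unitVec i)
  have h₂ := boundaryEnvelope_le_boundaryEnvelope_add_dist1 (g := g) (B := B) (δ := δ)
    (p + unitVec i) p
  rw [dist1_add_unitVec] at h₁
  rw [dist1_comm, dist1_add_unitVec] at h₂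
  rw [abs_le]
  constructor <;> push_cast at h₁ h₂ <;> linarith

variable {W : Set (Site d)} {x : Site d → ℤ}

lemma boundaryEnvelope_eq_of_mem (hB : ∀ b, b ∈ B ↔ b ∈ bd W) (hx : x ∈ Xgd g d)
    (hxδ : ∀ p ∈ bd W, x p = δ p) {b : Site d} (hb : b ∈ bd W) :
    boundaryEnvelope g B δ b = δ b := by
  refine le_antisymm ?_ ((Finset.le_fold_min _).mpr ⟨?_, fun c hc => ?_⟩)
  · simpa [dist1_self] using boundaryEnvelope_le_add_dist1 (g := g) ((hB b).mpr hb) b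
  · exact hxδ b hb ▸ (hx.1 b).2
  · have := abs_sub_le_dist1_of_mem_Xgd hx b c
    rw [hxδ b hb, hxδ c ((hB c).mp hc)] at this
    linarith [le_abs_self (δ b - δ c)]

lemma locAdmWith_boundaryEnvelope (hB : ∀ b, b ∈ B ↔ b ∈ bd W) (hx : x ∈ Xgd g d)
    (hxδ : ∀ p ∈ bd W, x p = δ p) : locAdmWith g W (boundaryEnvelope g B δ) δ := by
  refine ⟨fun p _ => ⟨(Finset.le_fold_min _).mpr ⟨Int.natCast_nonneg g, fun b hb => ?_⟩,
    boundaryEnvelope_le p⟩, fun p hp i hpi => ?_⟩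
  · have := (hx.1 b).1
    rw [hxδ b ((hB b).mp hb)] at this
    linarith [Int.natCast_nonneg (dist1 p b)]
  · have hglue : ∀ r ∈ W ∪ bd W,
        (if r ∈ W then boundaryEnvelope g B δ r else δ r) = boundaryEnvelope g B δ r := by
      intro r hr
      split_ifs with hrW
      · rfl
      · exact (boundaryEnvelope_eq_of_mem hB hx hxδ (hr.resolve_left hrW)).symm
    rw [hglue p hp, hglue _ hpi]
    exact abs_boundaryEnvelope_sub_add_unitVec p i

theorem IsMaximalConfig.eq_boundaryEnvelope {θ : Site d → ℤ} (hθ : IsMaximalConfig g W δ θ)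
    (hB : ∀ b, b ∈ B ↔ b ∈ bd W) {p : Site d} (hp : p ∈ W) :
    θ p = boundaryEnvelope g B δ p := by
  obtain ⟨⟨x, hx, hxθ, hxδ⟩, hmax⟩ := hθ
  refine le_antisymm ((Finset.le_fold_min _).mpr ⟨hxθ p hp ▸ (hx.1 p).2, fun b hb => ?_⟩)
    (hmax _ (locAdmWith_boundaryEnvelope hB hx hxδ) p hp)
  have := abs_sub_le_dist1_of_mem_Xgd hx p b
  rw [hxθ p hp, hxδ b ((hB b).mp hb)] at this
  linarith [le_abs_self (θ p - δ b)]

lemma exists_lt_of_boundaryEnvelope_lt {δ₁ δ₂ : Site d → ℤ} {p : Site d}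
    (h : boundaryEnvelope g B δ₁ p < boundaryEnvelope g B δ₂ p) :
    ∃ b ∈ B, δ₁ b < δ₂ b ∧ δ₁ b + dist1 p b < g := by
  have hlt_g := h.trans_le (boundaryEnvelope_le p)
  obtain ⟨b, hb, hb₁⟩ : ∃ b ∈ B, δ₁ b + dist1 p b ≤ boundaryEnvelope g B δ₁ p :=
    ((Finset.fold_min_le _).mp le_rfl).resolve_left hlt_g.not_ge
  exact ⟨b, hb, by linarith [boundaryEnvelope_le_add_dist1 (g := g) (δ := δ₂) hb p], by omega⟩

lemma IsMaximalConfig.nonneg_of_mem_bd {θ : Site d → ℤ} (hθ : IsMaximalConfig g W δ θ)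
    {b : Site d} (hb : b ∈ bd W) : 0 ≤ δ b := by
  obtain ⟨⟨x, hx, -, hxδ⟩, -⟩ := hθ
  exact hxδ b hb ▸ (hx.1 b).1

lemma IsMaximalConfig.exists_lt_of_lt {δ₁ δ₂ θ₁ θ₂ : Site d → ℤ}
    (hθ₁ : IsMaximalConfig g W δ₁ θ₁) (hθ₂ : IsMaximalConfig g W δ₂ θ₂)
    (hB : ∀ b, b ∈ B ↔ b ∈ bd W) {p : Site d} (hp : p ∈ W) (hlt : θ₁ p < θ₂ p) :
    ∃ q ∈ bd W, δ₁ q < δ₂ q ∧ dist1 p q < g := by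
  rw [hθ₁.eq_boundaryEnvelope hB hp, hθ₂.eq_boundaryEnvelope hB hp] at hlt
  obtain ⟨q, hq, hδ, hd⟩ := exists_lt_of_boundaryEnvelope_lt hlt
  have := hθ₁.nonneg_of_mem_bd ((hB q).mp hq)
  exact ⟨q, (hB q).mp hq, hδ, by omega⟩

end MaximalConfiguration

theorem xgd_maximal_configurations_differ_near_boundary_disagreement_general
    {g d : ℕ} (W : Set (Site d)) (hW : W.Finite)
    (δ₁ δ₂ θ₁ θ₂ : Site d → ℤ)
    (hθ₁ : (∃ x ∈ Xgd g d, (∀ p ∈ W, x p = θ₁ p) ∧ ∀ p ∈ bd W, x p = δ₁ p) ∧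
      ∀ w : Site d → ℤ, locAdmWith g W w δ₁ → ∀ p ∈ W, w p ≤ θ₁ p)
    (hθ₂ : (∃ x ∈ Xgd g d, (∀ p ∈ W, x p = θ₂ p) ∧ ∀ p ∈ bd W, x p = δ₂ p) ∧
      ∀ w : Site d → ℤ, locAdmWith g W w δ₂ → ∀ p ∈ W, w p ≤ θ₂ p) :
    ∀ p ∈ W, θ₁ p ≠ θ₂ p → ∃ q ∈ bd W, δ₁ q ≠ δ₂ q ∧ dist1 p q ≤ g := by
  intro p hp hne
  have hB (b : Site d) : b ∈ (bd_finite hW).toFinset ↔ b ∈ bd W := Set.Finite.mem_toFinset _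
  rcases hne.lt_or_gt with hlt | hlt
  · obtain ⟨q, hq, hδ, hd⟩ := IsMaximalConfig.exists_lt_of_lt hθ₁ hθ₂ hB hp hlt
    exact ⟨q, hq, hδ.ne, hd.le⟩
  · obtain ⟨q, hq, hδ, hd⟩ := IsMaximalConfig.exists_lt_of_lt hθ₂ hθ₁ hB hp hlt
    exact ⟨q, hq, hδ.ne', hd.le⟩

/-- In `X_g^d` (which satisfies TSSM with gap `g`), the maximal configurations `θ_{δ₁}`,
`θ_{δ₂}` for two globally admissible boundary conditions `δ₁, δ₂` on `∂W` differ only on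
`N_g(Σ_{∂W}(δ₁,δ₂)) ∩ W`. -/
theorem xgd_maximal_configurations_differ_near_boundary_disagreement
    {g d : ℕ} (W : Set (Site d)) (hW : W.Finite)
    (δ₁ δ₂ θ₁ θ₂ : Site d → ℤ)
    (hδ₁ : globallyAdm (Xgd g d) (bd W) δ₁)
    (hδ₂ : globallyAdm (Xgd g d) (bd W) δ₂)
    (hθ₁ : (∃ x ∈ Xgd g d, (∀ p ∈ W, x p = θ₁ p) ∧ ∀ p ∈ bd W, x p = δ₁ p) ∧
      ∀ w : Site d → ℤ, locAdmWith g W w δ₁ → ∀ p ∈ W, w p ≤ θ₁ p)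
    (hθ₂ : (∃ x ∈ Xgd g d, (∀ p ∈ W, x p = θ₂ p) ∧ ∀ p ∈ bd W, x p = δ₂ p) ∧
      ∀ w : Site d → ℤ, locAdmWith g W w δ₂ → ∀ p ∈ W, w p ≤ θ₂ p) :
    ∀ p ∈ W, θ₁ p ≠ θ₂ p → ∃ q ∈ bd W, δ₁ q ≠ δ₂ q ∧ dist1 p q ≤ g :=
  xgd_maximal_configurations_differ_near_boundary_disagreement_general W hW δ₁ δ₂ θ₁ θ₂ hθ₁ hθ₂
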